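/- arXiv:2208.08326 — 3 statements merged into one kernel-verified Lean document; each statement's English description precedes it below -/
import Mathlib

section
/- Let c > 0, ρ > 0, k ∈ ℕ, m ∈ ℕ with m ≥ 1 and mρ > kc, and x ≥ 0. Then for every bounded continuous f : [0,∞) → ℝ, lim_{n→∞} Σ_{j=0}^{∞} f( n((2j+k)ρ + k) / (2(mnρ − kc)) ) · p_{mn+kc,j}^{[c]}(x/n) = Σ_{j=0}^{∞} f( ((2j+k)ρ + k) / (2mρ) ) · e^{−mx}(mx)^j / j!; that is, lim_{n→∞} D_{mn,ρ}^{[c](k)}( f(nt); x/n ) = D_{m,ρ}^{[0](k)}( f(t); x ). -/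
/-!
Dominated convergence for series (Tannery's theorem). For fixed `j` the nodes converge to
`((2j+k)ρ+k)/(2mρ)`, and the Baskakov weight `p_{mn+kc,j}^{[c]}(x/n)` tends to the Poisson weight,
because `∏_{l<j} (mn+kc+cl)(x/n) → (mx)^j` and `(1 + cx/n)^{-(mn+kc)/c - j} → e^{-mx}`.
For domination, write the weight as `(1+cy)^{-a/c} ∏_{l<j} (a+cl)y / ((l+1)(1+cy))`: each factor is
at most `(m+kc)x/(l+1) + cx/(1+cx)` for all `n ≥ 1`, and the products of these bounds form a series
that converges by the ratio test, since the ratios tend to `cx/(1+cx) < 1`.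
-/

open Filter Topology Finset

/-- `baskakovWeight c a j y` is `p_{a,j}^{[c]}(y)`. -/
noncomputable def baskakovWeight (c a : ℝ) (j : ℕ) (y : ℝ) : ℝ :=
  (∏ l ∈ range j, (a + c * l)) / (j.factorial : ℝ) * y ^ j * (1 + c * y) ^ (-(a / c + j))

section BaskakovWeight

variable {c a y : ℝ} {j : ℕ}

theorem baskakovWeight_nonneg (hc : 0 ≤ c) (ha : 0 ≤ a) (hy : 0 ≤ y) :
    0 ≤ baskakovWeight c a j y := by
  have hprod : 0 ≤ ∏ l ∈ range j, (a + c * l) := prod_nonneg fun l _ => by positivity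
  unfold baskakovWeight
  positivity

theorem baskakovWeight_eq_mul_prod (hy : 0 < 1 + c * y) :
    baskakovWeight c a j y =
      (1 + c * y) ^ (-(a / c)) * ∏ l ∈ range j, (a + c * l) * y / ((l + 1) * (1 + c * y)) := by
  rw [baskakovWeight, neg_add, Real.rpow_add hy, Real.rpow_neg hy.le (j : ℝ), Real.rpow_natCast,
    prod_div_distrib, prod_mul_distrib, prod_mul_distrib, prod_const, prod_const, card_range]
  push_cast [← prod_range_add_one_eq_factorial]
  ring

theorem baskakovWeight_factor_le (hc : 0 ≤ c) (ha : 0 ≤ a) (hy : 0 ≤ y) {Y A : ℝ} (hyY : y ≤ Y)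
    (haA : a * y ≤ A) (l : ℕ) :
    (a + c * l) * y / ((l + 1) * (1 + c * y)) ≤ A / (l + 1) + c * Y / (1 + c * Y) := by
  have hl : (0 : ℝ) < l + 1 := by positivity
  have hcy : 0 ≤ c * y := by positivity
  have hcyY : c * y / (1 + c * y) ≤ c * Y / (1 + c * Y) := by
    rw [div_le_div_iff₀ (by positivity) (by nlinarith)]
    nlinarith [mul_le_mul_of_nonneg_left hyY hc]
  have hsplit : (a + c * l) * y / ((l + 1) * (1 + c * y)) =
      a * y / ((l + 1) * (1 + c * y)) + l / (l + 1) * (c * y / (1 + c * y)) := by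
    field_simp
  have h1 : a * y / ((l + 1) * (1 + c * y)) ≤ A / (l + 1) := by
    rw [div_le_div_iff₀ (by positivity) hl]
    have hA : 0 ≤ A := (mul_nonneg ha hy).trans haA
    nlinarith [mul_nonneg (mul_nonneg hA hl.le) hcy, mul_le_mul_of_nonneg_right haA hl.le]
  have h2 : l / (l + 1) * (c * y / (1 + c * y)) ≤ c * y / (1 + c * y) :=
    mul_le_of_le_one_left (by positivity) ((div_le_one hl).2 (by linarith))
  linarith

theorem baskakovWeight_le_prod (hc : 0 ≤ c) (ha : 0 ≤ a) (hy : 0 ≤ y) {Y A : ℝ} (hyY : y ≤ Y)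
    (haA : a * y ≤ A) :
    baskakovWeight c a j y ≤ ∏ l ∈ range j, (A / (l + 1) + c * Y / (1 + c * Y)) := by
  have hb : 1 ≤ 1 + c * y := le_add_of_nonneg_right (mul_nonneg hc hy)
  rw [baskakovWeight_eq_mul_prod (by linarith)]
  have hpow : (1 + c * y) ^ (-(a / c)) ≤ 1 :=
    Real.rpow_le_one_of_one_le_of_nonpos hb (neg_nonpos.2 (by positivity))
  have hfactor_nonneg : ∀ l ∈ range j, 0 ≤ (a + c * l) * y / ((l + 1) * (1 + c * y)) :=
    fun l _ => by positivity
  exact (mul_le_of_le_one_left (prod_nonneg hfactor_nonneg) hpow).trans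
    (prod_le_prod hfactor_nonneg fun l _ => baskakovWeight_factor_le hc ha hy hyY haA l)

theorem baskakovWeight_mul_add_le_prod (hc : 0 ≤ c) {μ b x : ℝ} (hμ : 0 ≤ μ) (hb : 0 ≤ b)
    (hx : 0 ≤ x) {n : ℕ} (hn : 1 ≤ n) :
    baskakovWeight c (μ * n + b) j (x / n) ≤
      ∏ l ∈ range j, ((μ + b) * x / (l + 1) + c * x / (1 + c * x)) := by
  have hn' : (1 : ℝ) ≤ n := by exact_mod_cast hn
  have hxn : x / n ≤ x := div_le_self hx hn'
  have hA : (μ * n + b) * (x / n) ≤ (μ + b) * x := by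
    have : (μ * n + b) * (x / n) = μ * x + b * (x / n) := by field_simp
    nlinarith [mul_le_mul_of_nonneg_left hxn hb]
  exact baskakovWeight_le_prod hc (by positivity) (by positivity) hxn hA

end BaskakovWeight

theorem summable_prod_div_succ_add {A ε : ℝ} (hA : 0 ≤ A) (hε₀ : 0 ≤ ε) (hε : ε < 1) :
    Summable fun j : ℕ => ∏ l ∈ range j, (A / (l + 1) + ε) := by
  have hsmall : ∀ᶠ j : ℕ in atTop, A / (j + 1) < (1 - ε) / 2 := by
    have : Tendsto (fun j : ℕ => A / ((j : ℝ) + 1)) atTop (𝓝 0) :=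
      tendsto_const_div_atTop_nhds_zero_nat A |>.comp (tendsto_add_atTop_nat 1) |>.congr
        fun j => by simp
    exact this.eventually (gt_mem_nhds (by linarith))
  refine summable_of_ratio_norm_eventually_le (r := (1 + ε) / 2) (by linarith) ?_
  filter_upwards [hsmall] with j hj
  have hprod : 0 ≤ ∏ l ∈ range j, (A / (l + 1) + ε) := prod_nonneg fun l _ => by positivity
  rw [prod_range_succ, Real.norm_of_nonneg hprod, Real.norm_of_nonneg (by positivity), mul_comm]
  gcongr
  linarith

theorem natCast_mul_div_mul_sub_nonneg {p q r : ℝ} (hp : 0 ≤ p) (hr : 0 ≤ r) (hrq : r < q)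
    {n : ℕ} (hn : 1 ≤ n) : 0 ≤ n * p / (q * n - r) := by
  have hn' : (1 : ℝ) ≤ n := by exact_mod_cast hn
  have : q ≤ q * n := le_mul_of_one_le_right (hr.trans hrq.le) hn'
  exact div_nonneg (by positivity) (by linarith)

theorem tendsto_natCast_mul_div_mul_sub {p q r : ℝ} (hp : 0 ≤ p) (hr : 0 ≤ r) (hrq : r < q) :
    Tendsto (fun n : ℕ => n * p / (q * n - r)) atTop (𝓝[Set.Ici 0] (p / q)) := by
  have hden : Tendsto (fun n : ℕ => q - r / n) atTop (𝓝 q) := by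
    simpa using (tendsto_const_div_atTop_nhds_zero_nat r).const_sub q
  have hlim : Tendsto (fun n : ℕ => n * p / (q * n - r)) atTop (𝓝 (p / q)) := by
    refine (tendsto_const_nhds.div hden (hr.trans_lt hrq).ne').congr' ?_
    filter_upwards [eventually_ne_atTop 0] with n hn
    change p / (q - r / n) = _
    rw [sub_div' (Nat.cast_ne_zero.2 hn), div_div_eq_mul_div, mul_comm]
  exact tendsto_nhdsWithin_iff.2 ⟨hlim, eventually_atTop.2
    ⟨1, fun n hn => natCast_mul_div_mul_sub_nonneg hp hr hrq hn⟩⟩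

theorem tendsto_mul_add_div_natCast (μ b : ℝ) :
    Tendsto (fun n : ℕ => (μ * n + b) / n) atTop (𝓝 μ) := by
  have := (tendsto_const_div_atTop_nhds_zero_nat b).const_add μ
  rw [add_zero] at this
  refine this.congr' ?_
  filter_upwards [eventually_ne_atTop 0] with n hn
  field_simp

theorem tendsto_baskakovWeight {c μ x : ℝ} {a : ℕ → ℝ} (hc : c ≠ 0)
    (ha : Tendsto (fun n : ℕ => a n / n) atTop (𝓝 μ)) (j : ℕ) :
    Tendsto (fun n : ℕ => baskakovWeight c (a n) j (x / n)) atTop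
      (𝓝 (Real.exp (-(μ * x)) * (μ * x) ^ j / j.factorial)) := by
  have hprod : Tendsto (fun n : ℕ => ∏ l ∈ range j, (a n + c * l) * (x / n)) atTop
      (𝓝 ((μ * x) ^ j)) := by
    have hfactor (l : ℕ) : Tendsto (fun n : ℕ => (a n + c * l) * (x / n)) atTop (𝓝 (μ * x)) := by
      have : Tendsto (fun n : ℕ => a n / n * x + c * l * x / n) atTop (𝓝 (μ * x + 0)) :=
        (ha.mul_const x).add (tendsto_const_div_atTop_nhds_zero_nat _)
      refine (add_zero (μ * x) ▸ this).congr fun n => ?_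
      ring
    simpa using tendsto_finsetProd (range j) fun l _ => hfactor l
  have hlog : Tendsto (fun n : ℕ => (n : ℝ) * Real.log (1 + c * x / n)) atTop (𝓝 (c * x)) :=
    (Real.tendsto_mul_log_one_add_div_atTop (c * x)).comp tendsto_natCast_atTop_atTop
  have hexponent : Tendsto (fun n : ℕ => -(a n / n / c + j / n) * (n * Real.log (1 + c * x / n)))
      atTop (𝓝 (-(μ * x))) := by
    have := ((ha.div_const c).add (tendsto_const_div_atTop_nhds_zero_nat (j : ℝ))).neg.mul hlog
    convert this using 2
    field_simp
    ring
  have hbase : ∀ᶠ n : ℕ in atTop, 0 < 1 + c * (x / n) := by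
    have : Tendsto (fun n : ℕ => 1 + c * x / n) atTop (𝓝 (1 + 0)) :=
      (tendsto_const_div_atTop_nhds_zero_nat _).const_add 1
    filter_upwards [this.eventually (lt_mem_nhds (by norm_num : (0 : ℝ) < 1 + 0))] with n hn
    rwa [mul_div_assoc] at hn
  have hpow : Tendsto (fun n : ℕ => (1 + c * (x / n)) ^ (-(a n / c + j))) atTop
      (𝓝 (Real.exp (-(μ * x)))) := by
    refine ((Real.continuous_exp.tendsto _).comp hexponent).congr' ?_
    filter_upwards [hbase, eventually_ne_atTop 0] with n hb hn
    rw [Function.comp_apply, Real.rpow_def_of_pos hb, ← mul_div_assoc]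
    field_simp
  rw [show Real.exp (-(μ * x)) * (μ * x) ^ j / j.factorial =
    (μ * x) ^ j / j.factorial * Real.exp (-(μ * x)) by ring]
  refine ((hprod.div_const _).mul hpow).congr fun n => ?_
  rw [baskakovWeight, prod_mul_distrib, prod_const, card_range]
  ring

theorem stmt_5_general (c ρ : ℝ) (hc : 0 < c) (hρ : 0 < ρ) (k m : ℕ)
    (hmρ : k * c < m * ρ) (x : ℝ) (hx : 0 ≤ x)
    (f : ℝ → ℝ) (hf : ContinuousOn f (Set.Ici 0))
    (hfb : ∃ M : ℝ, ∀ t ∈ Set.Ici (0 : ℝ), |f t| ≤ M) :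
    Tendsto (fun n : ℕ =>
        ∑' j : ℕ,
          f ((n : ℝ) * ((2 * j + k) * ρ + k) / (2 * ((m * n : ℕ) * ρ - k * c))) *
            (((∏ l ∈ Finset.range j, (((m * n : ℕ) : ℝ) + k * c + c * l)) / (j.factorial : ℝ)) *
              (x / n) ^ j *
                (1 + c * (x / n)) ^ (-((((m * n : ℕ) : ℝ) + k * c) / c + (j : ℝ)))))
      atTop
      (𝓝 (∑' j : ℕ,
        f (((2 * j + k) * ρ + k) / (2 * (m * ρ))) *
          (Real.exp (-(m * x)) * (m * x) ^ j / (j.factorial : ℝ)))) := by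
  obtain ⟨M, hM⟩ := hfb
  have hM₀ : 0 ≤ M := (abs_nonneg _).trans (hM 0 (Set.mem_Ici.2 le_rfl))
  have hkc : (0 : ℝ) ≤ 2 * (k * c) := by positivity
  have hkcmρ : 2 * (k * c) < 2 * (m * ρ) := by linarith
  have hnode (n j : ℕ) : (n : ℝ) * ((2 * j + k) * ρ + k) / (2 * (m * n * ρ - k * c)) =
      n * ((2 * j + k) * ρ + k) / (2 * (m * ρ) * n - 2 * (k * c)) := by ring
  simp only [Nat.cast_mul, hnode]
  refine tendsto_tsum_of_dominated_convergence
    (bound := fun j => M * ∏ l ∈ range j, ((m + k * c) * x / (l + 1) + c * x / (1 + c * x)))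
    ((summable_prod_div_succ_add (by positivity) (by positivity)
      ((div_lt_one (by positivity)).2 (by linarith))).mul_left M) (fun j => ?_) ?_
  · exact ((hf _ (Set.mem_Ici.2 (by positivity))).tendsto.comp
      (tendsto_natCast_mul_div_mul_sub (by positivity) hkc hkcmρ)).mul
      (tendsto_baskakovWeight hc.ne' (tendsto_mul_add_div_natCast _ _) j)
  · filter_upwards [eventually_ge_atTop 1] with n hn j
    have hw := baskakovWeight_nonneg (j := j) hc.le
      (by positivity : (0 : ℝ) ≤ m * n + k * c) (by positivity : 0 ≤ x / n)
    change ‖f _ * baskakovWeight c (m * n + k * c) j (x / n)‖ ≤ _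
    rw [norm_mul, Real.norm_eq_abs, Real.norm_of_nonneg hw]
    exact mul_le_mul (hM _ (natCast_mul_div_mul_sub_nonneg (by positivity) hkc hkcmρ hn))
      (baskakovWeight_mul_add_le_prod hc.le (Nat.cast_nonneg m) (by positivity) hx hn) hw hM₀

/-- **Convergence of the rescaled discrete operators `D_{mn,ρ}^{[c](k)}` associated with the
linking operators to `D_{m,ρ}^{[0](k)}`:** for `c > 0`, `ρ > 0`, `k ∈ ℕ`, `m ≥ 1` with
`mρ > kc`, `x ≥ 0` and bounded continuous `f : [0,∞) → ℝ`,
`lim_{n→∞} D_{mn,ρ}^{[c](k)}(f(nt); x/n) = D_{m,ρ}^{[0](k)}(f(t); x)`. -/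
theorem stmt_5 (c ρ : ℝ) (hc : 0 < c) (hρ : 0 < ρ) (k m : ℕ) (hm : 1 ≤ m)
    (hmρ : k * c < m * ρ) (x : ℝ) (hx : 0 ≤ x)
    (f : ℝ → ℝ) (hf : ContinuousOn f (Set.Ici 0))
    (hfb : ∃ M : ℝ, ∀ t ∈ Set.Ici (0 : ℝ), |f t| ≤ M) :
    Tendsto (fun n : ℕ =>
        ∑' j : ℕ,
          f ((n : ℝ) * ((2 * j + k) * ρ + k) / (2 * ((m * n : ℕ) * ρ - k * c))) *
            (((∏ l ∈ Finset.range j, (((m * n : ℕ) : ℝ) + k * c + c * l)) / (j.factorial : ℝ)) *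
              (x / n) ^ j *
                (1 + c * (x / n)) ^ (-((((m * n : ℕ) : ℝ) + k * c) / c + (j : ℝ)))))
      atTop
      (𝓝 (∑' j : ℕ,
        f (((2 * j + k) * ρ + k) / (2 * (m * ρ))) *
          (Real.exp (-(m * x)) * (m * x) ^ j / (j.factorial : ℝ)))) :=
  stmt_5_general c ρ hc hρ k m hmρ x hx f hf hfb
end

section
/- Let m ∈ ℕ with m ≥ 1 and x ≥ 0. Then for every bounded continuous f : [0,∞) → ℝ, lim_{n→∞} (1 + x/n)^{−mn} Σ_{k=0}^{mn} C(mn,k) (x/n)^k f(k/m) = Σ_{k=0}^{∞} e^{−mx}(mx)^k/k! · f(k/m); that is, lim_{n→∞} H_{mn}( f((mn+1)t/(m(1+t))); x/n ) = B_m^{[0]}( f(t); x ). -/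
/-!
With `N = m n` and `λ = m x` the left-hand side is `(1 + λ/N)^(-N) ∑_{k ≤ N} C(N,k) (λ/N)^k f(k/m)`.
The prefactor tends to `e^(-λ)`, and each binomial weight `C(N,k) (λ/N)^k` tends to the Poisson
weight `λ^k/k!` while staying below `|λ|^k/k!`, a summable bound; since `f` is bounded, Tannery's
theorem (dominated convergence for series) lets the limit pass through the sum.
-/

open Filter Topology

lemma Nat.cast_choose_mul_pow_le {t : ℝ} (ht : 0 ≤ t) (N k : ℕ) :
    (N.choose k : ℝ) * t ^ k ≤ (N * t) ^ k / k.factorial := by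
  rw [mul_pow, mul_div_right_comm]
  exact mul_le_mul_of_nonneg_right (Nat.choose_le_pow_div k N) (by positivity)

lemma tendsto_choose_mul_div_pow (lam : ℝ) (k : ℕ) :
    Tendsto (fun N : ℕ => (N.choose k : ℝ) * (lam / N) ^ k) atTop
      (𝓝 (lam ^ k / k.factorial)) := by
  refine ProbabilityTheory.tendsto_choose_mul_pow_atTop k (tendsto_const_nhds.congr' ?_)
  filter_upwards [eventually_ne_atTop 0] with N hN
  field_simp

lemma tendsto_one_add_div_zpow_neg (lam : ℝ) :
    Tendsto (fun N : ℕ => (1 + lam / N) ^ (-(N : ℤ))) atTop (𝓝 (Real.exp (-lam))) := by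
  simp only [zpow_neg, zpow_natCast, Real.exp_neg]
  exact (Real.tendsto_one_add_div_pow_exp lam).inv₀ (Real.exp_ne_zero lam)

lemma sum_range_choose_mul_div_pow_eq_tsum (lam : ℝ) (c : ℕ → ℝ) (N : ℕ) :
    ∑ k ∈ Finset.range (N + 1), (N.choose k : ℝ) * (lam / N) ^ k * c k
      = ∑' k, (N.choose k : ℝ) * (lam / N) ^ k * c k := by
  refine (tsum_eq_sum fun k hk => ?_).symm
  rw [Finset.mem_range, not_lt] at hk
  simp [Nat.choose_eq_zero_of_lt (Nat.lt_of_succ_le hk)]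

theorem tendsto_sum_choose_mul_div_pow {c : ℕ → ℝ} {M : ℝ} (hc : ∀ k, |c k| ≤ M) (lam : ℝ) :
    Tendsto (fun N : ℕ => ∑ k ∈ Finset.range (N + 1), (N.choose k : ℝ) * (lam / N) ^ k * c k)
      atTop (𝓝 (∑' k, lam ^ k / k.factorial * c k)) := by
  simp only [sum_range_choose_mul_div_pow_eq_tsum]
  refine tendsto_tsum_of_dominated_convergence
    ((Real.summable_pow_div_factorial |lam|).mul_right M)
    (fun k => (tendsto_choose_mul_div_pow lam k).mul_const (c k)) ?_
  filter_upwards [eventually_ne_atTop 0] with N hN k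
  have hweight : (N.choose k : ℝ) * (|lam| / N) ^ k ≤ |lam| ^ k / k.factorial := by
    have hN' : (N : ℝ) ≠ 0 := Nat.cast_ne_zero.2 hN
    simpa only [mul_div_cancel₀ _ hN'] using
      Nat.cast_choose_mul_pow_le (t := |lam| / N) (by positivity) N k
  rw [Real.norm_eq_abs, abs_mul, abs_mul, Nat.abs_cast, abs_pow, abs_div, Nat.abs_cast]
  exact mul_le_mul hweight (hc k) (abs_nonneg _) (by positivity)

theorem tendsto_binomial_sum_poisson {c : ℕ → ℝ} {M : ℝ} (hc : ∀ k, |c k| ≤ M) (lam : ℝ) :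
    Tendsto (fun N : ℕ => (1 + lam / N) ^ (-(N : ℤ)) *
        ∑ k ∈ Finset.range (N + 1), (N.choose k : ℝ) * (lam / N) ^ k * c k)
      atTop (𝓝 (∑' k, Real.exp (-lam) * lam ^ k / k.factorial * c k)) := by
  simp only [mul_div_assoc, mul_assoc, tsum_mul_left]
  simpa only [← mul_assoc] using
    (tendsto_one_add_div_zpow_neg lam).mul (tendsto_sum_choose_mul_div_pow hc lam)

theorem stmt_8_general (m : ℕ) (hm : 1 ≤ m) (x : ℝ)
    (f : ℝ → ℝ)
    (hfb : ∃ M : ℝ, ∀ t ∈ Set.Ici (0 : ℝ), |f t| ≤ M) :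
    Tendsto (fun n : ℕ =>
        (1 + x / n) ^ (-(m * n : ℤ)) *
          ∑ k ∈ Finset.range (m * n + 1),
            ((m * n).choose k : ℝ) * (x / n) ^ k * f (k / m))
      atTop
      (𝓝 (∑' k : ℕ, Real.exp (-(m * x)) * (m * x) ^ k / (k.factorial : ℝ) * f (k / m))) := by
  obtain ⟨M, hM⟩ := hfb
  have hbound (k : ℕ) : |f (k / m)| ≤ M := hM _ (Set.mem_Ici.2 (by positivity))
  have hmn : Tendsto (fun n : ℕ => m * n) atTop atTop :=
    tendsto_id.const_mul_atTop' (by omega)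
  have hm0 : (m : ℝ) ≠ 0 := Nat.cast_ne_zero.2 (by omega)
  refine ((tendsto_binomial_sum_poisson hbound (m * x)).comp hmn).congr fun n => ?_
  simp only [Function.comp_apply, Nat.cast_mul, mul_div_mul_left _ _ hm0]

/-- **Convergence of rescaled Bleimann–Butzer–Hahn operators (second modification) to the
Szász–Mirakjan operator:** for `m ≥ 1`, `x ≥ 0` and bounded continuous `f : [0,∞) → ℝ`,
`lim_{n→∞} H_{mn}(f((mn+1)t/(m(1+t))); x/n) = B_m^{[0]}(f(t); x)`. -/
theorem stmt_8 (m : ℕ) (hm : 1 ≤ m) (x : ℝ) (hx : 0 ≤ x)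
    (f : ℝ → ℝ) (hf : ContinuousOn f (Set.Ici 0))
    (hfb : ∃ M : ℝ, ∀ t ∈ Set.Ici (0 : ℝ), |f t| ≤ M) :
    Tendsto (fun n : ℕ =>
        (1 + x / n) ^ (-(m * n : ℤ)) *
          ∑ k ∈ Finset.range (m * n + 1),
            ((m * n).choose k : ℝ) * (x / n) ^ k * f (k / m))
      atTop
      (𝓝 (∑' k : ℕ, Real.exp (-(m * x)) * (m * x) ^ k / (k.factorial : ℝ) * f (k / m))) :=
  stmt_8_general m hm x f hfb
end

section
/- Let m ∈ ℕ with m ≥ 1 and x ≥ 0. Then for every bounded continuous f : [0,∞) → ℝ, lim_{n→∞} (1 − x/n)^{mn+1} Σ_{k=0}^{∞} C(mn+k,k) (x/n)^k f( (mn+1)k/(m²n) ) = Σ_{k=0}^{∞} e^{−mx}(mx)^k/k! · f(k/m); that is, lim_{n→∞} M_{mn}( f((mn+1)t/(m(1−t))); x/n ) = B_m^{[0]}( f(t); x ). -/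
/-!
With `N = mn` and `q = x/n`, the sum is `∑ₖ w(N, q, k) f(νₖ)` with the negative binomial weights
`w(N, q, k) = (1 - q)^(N+1) C(N+k, k) q^k` and nodes `νₖ = (mn+1)k/(m²n)`. For fixed `k` the weight
tends to the Poisson weight `e^(-mx) (mx)^k / k!` and the node to `k/m`. Comparing with the
negative binomial series at `2q` gives `w(N, q, k) ≤ e^(4x(m+1)) 2^(-k)` once `n ≥ 4x`, so
dominated convergence for series lets the limit pass through the sum.
-/

open Filter Topology Finset Real
open scoped Nat

theorem choose_mul_pow_le_inv_one_sub_pow (N k : ℕ) {r : ℝ} (hr0 : 0 ≤ r) (hr1 : r < 1) :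
    ((N + k).choose k : ℝ) * r ^ k ≤ ((1 - r) ^ (N + 1))⁻¹ := by
  have hr : ‖r‖ < 1 := by rwa [Real.norm_of_nonneg hr0]
  have h := le_hasSum (hasSum_choose_mul_geometric_of_norm_lt_one N hr) k fun j _ => by positivity
  rwa [add_comm, Nat.choose_symm_add, one_div] at h

theorem inv_one_sub_le_exp_two_mul {t : ℝ} (ht0 : 0 ≤ t) (ht : t ≤ 1 / 2) :
    (1 - t)⁻¹ ≤ exp (2 * t) :=
  calc (1 - t)⁻¹ ≤ 2 * t + 1 := by
        rw [inv_le_iff_one_le_mul₀ (by linarith)]; nlinarith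
    _ ≤ exp (2 * t) := add_one_le_exp _

def mkzWeight (N : ℕ) (q : ℝ) (k : ℕ) : ℝ := (1 - q) ^ (N + 1) * ((N + k).choose k * q ^ k)

theorem mkzWeight_nonneg (N k : ℕ) {q : ℝ} (hq0 : 0 ≤ q) (hq1 : q ≤ 1) :
    0 ≤ mkzWeight N q k := by
  unfold mkzWeight
  have : 0 ≤ 1 - q := by linarith
  positivity

theorem mkzWeight_le (N k : ℕ) {q : ℝ} (hq0 : 0 ≤ q) (hq : q ≤ 1 / 4) :
    mkzWeight N q k ≤ exp (4 * q * (N + 1)) * (1 / 2) ^ k := by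
  have hC := choose_mul_pow_le_inv_one_sub_pow N k (r := 2 * q) (by positivity) (by linarith)
  calc mkzWeight N q k ≤ (N + k).choose k * q ^ k :=
        mul_le_of_le_one_left (by positivity) (pow_le_one₀ (by linarith) (by linarith))
    _ = (1 / 2) ^ k * ((N + k).choose k * (2 * q) ^ k) := by
        rw [mul_left_comm, ← mul_pow, one_div, inv_mul_cancel_left₀ two_ne_zero]
    _ ≤ (1 / 2) ^ k * ((1 - 2 * q)⁻¹) ^ (N + 1) := by
        rw [inv_pow]; gcongr
    _ ≤ (1 / 2) ^ k * exp (2 * (2 * q)) ^ (N + 1) := by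
        gcongr
        · have : 0 < 1 - 2 * q := by linarith
          positivity
        · exact inv_one_sub_le_exp_two_mul (by positivity) (by linarith)
    _ = exp (4 * q * (N + 1)) * (1 / 2) ^ k := by
        rw [← exp_nat_mul]; push_cast; ring_nf

theorem mkzWeight_mul_div_le (m k : ℕ) {n : ℕ} {x : ℝ} (hx : 0 ≤ x) (hn : 1 ≤ n)
    (hxn : 4 * x ≤ n) :
    mkzWeight (m * n) (x / n) k ≤ exp (4 * x * (m + 1)) * (1 / 2) ^ k := by
  have hn0 : (0 : ℝ) < n := by exact_mod_cast hn
  refine (mkzWeight_le _ k (by positivity) ?_).trans ?_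
  · rw [div_le_iff₀ hn0]; linarith
  · refine mul_le_mul_of_nonneg_right (exp_le_exp.2 ?_) (by positivity)
    have h : 4 * (x / n) * ((m * n : ℕ) + 1) = 4 * x * (m + 1 / n) := by
      push_cast; field_simp
    rw [h]
    gcongr
    exact div_le_one_of_le₀ (by exact_mod_cast hn) hn0.le

theorem factorial_mul_add_choose_eq_prod (N k : ℕ) :
    (k ! : ℝ) * (N + k).choose k = ∏ i ∈ range k, ((N : ℝ) + 1 + i) := by
  rw [← Nat.cast_mul, ← Nat.ascFactorial_eq_factorial_mul_choose, Nat.ascFactorial_eq_prod_range]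
  push_cast
  rfl

theorem tendsto_choose_mul_div_pow_s10 (m k : ℕ) (x : ℝ) :
    Tendsto (fun n : ℕ => ((m * n + k).choose k : ℝ) * (x / n) ^ k) atTop
      (𝓝 ((m * x) ^ k / k !)) := by
  have hlim : Tendsto (fun n : ℕ => (∏ i ∈ range k, ((m : ℝ) + (1 + i) / n)) * (x ^ k / k !))
      atTop (𝓝 ((∏ _i ∈ range k, (m : ℝ)) * (x ^ k / k !))) := by
    refine Tendsto.mul_const _ (tendsto_finsetProd _ fun i _ => ?_)
    simpa using tendsto_const_nhds.add (tendsto_const_div_atTop_nhds_zero_nat (1 + i : ℝ))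
  rw [prod_const, card_range] at hlim
  rw [mul_pow, mul_div_assoc]
  refine hlim.congr' ?_
  filter_upwards [eventually_ge_atTop 1] with n hn
  have hn0 : (n : ℝ) ≠ 0 := by positivity
  have hprod := prod_mul_pow_card (s := range k) (f := fun i => (m : ℝ) + (1 + i) / n) (b := n)
  have hfactor : ∀ i ∈ range k, ((m : ℝ) + (1 + i) / n) * n = ((m * n : ℕ) : ℝ) + 1 + i :=
    fun i _ => by push_cast; field_simp; ring
  rw [card_range, prod_congr rfl hfactor, ← factorial_mul_add_choose_eq_prod] at hprod
  rw [div_pow, ← mul_div_assoc, ← mul_div_assoc, div_eq_div_iff (by positivity) (by positivity)]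
  linear_combination x ^ k * hprod

theorem tendsto_one_sub_div_pow_mul_add_one (m : ℕ) (x : ℝ) :
    Tendsto (fun n : ℕ => (1 - x / n) ^ (m * n + 1)) atTop (𝓝 (exp (-(m * x)))) := by
  have hpow : Tendsto (fun n : ℕ => ((1 + -x / n) ^ n) ^ m) atTop (𝓝 (exp (-x) ^ m)) :=
    (tendsto_one_add_div_pow_exp (-x)).pow m
  have hone : Tendsto (fun n : ℕ => 1 + -x / n) atTop (𝓝 1) := by
    simpa using tendsto_const_nhds.add (tendsto_const_div_atTop_nhds_zero_nat (-x))
  rw [← mul_neg, exp_nat_mul, ← mul_one (exp (-x) ^ m)]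
  refine (hpow.mul hone).congr fun n => ?_
  rw [neg_div, ← sub_eq_add_neg, ← pow_mul, ← pow_succ, mul_comm n]

theorem tendsto_mkzWeight (m k : ℕ) (x : ℝ) :
    Tendsto (fun n : ℕ => mkzWeight (m * n) (x / n) k) atTop
      (𝓝 (exp (-(m * x)) * (m * x) ^ k / k !)) := by
  rw [mul_div_assoc]
  exact (tendsto_one_sub_div_pow_mul_add_one m x).mul (tendsto_choose_mul_div_pow_s10 m k x)

noncomputable def mkzNode (m n k : ℕ) : ℝ := ((m * n : ℕ) + 1 : ℝ) * k / (m ^ 2 * n)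

theorem mkzNode_nonneg (m n k : ℕ) : 0 ≤ mkzNode m n k := by
  unfold mkzNode
  positivity

theorem tendsto_mkzNode (m k : ℕ) : Tendsto (fun n => mkzNode m n k) atTop (𝓝 (k / m)) := by
  unfold mkzNode
  rcases m.eq_zero_or_pos with rfl | hm
  · simp
  have h : Tendsto (fun n : ℕ => (k : ℝ) / m + (k / m ^ 2) * (1 / n)) atTop
      (𝓝 ((k : ℝ) / m + (k / m ^ 2) * 0)) :=
    tendsto_const_nhds.add (tendsto_const_nhds.mul tendsto_one_div_atTop_nhds_zero_nat)
  rw [mul_zero, add_zero] at h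
  refine h.congr' ?_
  filter_upwards [eventually_ge_atTop 1] with n hn
  have hn0 : (n : ℝ) ≠ 0 := by positivity
  push_cast
  field_simp

theorem stmt_10_general (m : ℕ) (x : ℝ) (hx : 0 ≤ x)
    (f : ℝ → ℝ) (hf : ContinuousOn f (Set.Ici 0))
    (hfb : ∃ M : ℝ, ∀ t ∈ Set.Ici (0 : ℝ), |f t| ≤ M) :
    Tendsto (fun n : ℕ =>
        (1 - x / n) ^ (m * n + 1) *
          ∑' k : ℕ, ((m * n + k).choose k : ℝ) * (x / n) ^ k *
            f (((m * n : ℕ) + 1 : ℝ) * k / (m ^ 2 * n)))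
      atTop
      (𝓝 (∑' k : ℕ, Real.exp (-(m * x)) * (m * x) ^ k / (k.factorial : ℝ) * f (k / m))) := by
  obtain ⟨M, hM⟩ := hfb
  have hseries (n : ℕ) : (1 - x / n) ^ (m * n + 1) *
      ∑' k : ℕ, ((m * n + k).choose k : ℝ) * (x / n) ^ k *
        f (((m * n : ℕ) + 1 : ℝ) * k / (m ^ 2 * n)) =
      ∑' k : ℕ, mkzWeight (m * n) (x / n) k * f (mkzNode m n k) := by
    simp only [← tsum_mul_left, mkzWeight, mkzNode, mul_assoc]
  simp only [hseries]
  refine tendsto_tsum_of_dominated_convergence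
    (bound := fun k => exp (4 * x * (m + 1)) * (1 / 2) ^ k * M)
    ((summable_geometric_two.mul_left _).mul_right _) (fun k => ?_) ?_
  · have hfk := (hf _ (Set.mem_Ici.2 (by positivity))).tendsto.comp
      (tendsto_nhdsWithin_iff.2 ⟨tendsto_mkzNode m k, .of_forall fun n => mkzNode_nonneg m n k⟩)
    exact (tendsto_mkzWeight m k x).mul hfk
  · filter_upwards [eventually_ge_atTop 1,
      tendsto_natCast_atTop_atTop.eventually_ge_atTop (4 * x)] with n hn hxn k
    have hq : x / n ≤ 1 := div_le_one_of_le₀ (by linarith) (by positivity)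
    rw [norm_mul, Real.norm_of_nonneg (mkzWeight_nonneg _ _ (by positivity) hq)]
    exact mul_le_mul (mkzWeight_mul_div_le m k hx hn hxn) (hM _ (mkzNode_nonneg m n k))
      (norm_nonneg _) (by positivity)

/-- **Convergence of rescaled Meyer–König and Zeller operators (second modification) to the
Szász–Mirakjan operator:** for `m ≥ 1`, `x ≥ 0` and bounded continuous `f : [0,∞) → ℝ`,
`lim_{n→∞} M_{mn}(f((mn+1)t/(m(1-t))); x/n) = B_m^{[0]}(f(t); x)`. -/
theorem stmt_10 (m : ℕ) (hm : 1 ≤ m) (x : ℝ) (hx : 0 ≤ x)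
    (f : ℝ → ℝ) (hf : ContinuousOn f (Set.Ici 0))
    (hfb : ∃ M : ℝ, ∀ t ∈ Set.Ici (0 : ℝ), |f t| ≤ M) :
    Tendsto (fun n : ℕ =>
        (1 - x / n) ^ (m * n + 1) *
          ∑' k : ℕ, ((m * n + k).choose k : ℝ) * (x / n) ^ k *
            f (((m * n : ℕ) + 1 : ℝ) * k / (m ^ 2 * n)))
      atTop
      (𝓝 (∑' k : ℕ, Real.exp (-(m * x)) * (m * x) ^ k / (k.factorial : ℝ) * f (k / m))) :=
  stmt_10_general m x hx f hf hfb
end
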